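/- arXiv:2601.02369 — 2 statements merged into one kernel-verified Lean document; each statement's English description precedes it below -/
import Mathlib

section
/- Conversely, if the MEAF instance built from a 3-Partition instance (demands s_i with B/4 < s_i < B/2, Σ s_i = mB, m apps of capacity B, no solid edges, all dashed edges available) admits a feasible integral flow using at most 3m activated edges, then the s_i can be partitioned into m triples each summing to B. -/
theorem feasible_flow_gives_partition
    (m B : ℕ) (hB : 0 < B) (s : Fin (3 * m) → ℕ)
    (hlo : ∀ i, 4 * s i > B) (hhi : ∀ i, 2 * s i < B)
    (htot : ∑ i, s i = m * B)
    (f : Fin (3 * m) × Fin m → ℕ)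
    (hrow : ∀ i, ∑ a, f (i, a) = s i)
    (hcap : ∀ a, ∑ i, f (i, a) ≤ B)
    (hsupp : (Finset.univ.filter (fun p : Fin (3 * m) × Fin m => 0 < f p)).card ≤ 3 * m) :
    ∃ T : Fin m → Finset (Fin (3 * m)),
      (∀ j k, j ≠ k → Disjoint (T j) (T k)) ∧
      Finset.univ.biUnion T = Finset.univ ∧
      (∀ j, (T j).card = 3) ∧
      (∀ j, ∑ i ∈ T j, s i = B) := by
  classical
  have hspos : ∀ i, 0 < s i := fun i => by have := hlo i; omega
  set S := Finset.univ.filter (fun p : Fin (3 * m) × Fin m => 0 < f p) with hSdef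
  have hrowpos : ∀ i : Fin (3 * m), ∃ a, 0 < f (i, a) := by
    intro i
    by_contra h
    push_neg at h
    have h0 : ∑ a, f (i, a) = 0 :=
      Finset.sum_eq_zero (fun a _ => Nat.le_zero.mp (h a))
    have := hrow i; have := hspos i; omega
  have himg : S.image Prod.fst = Finset.univ := by
    apply Finset.eq_univ_of_forall
    intro i
    obtain ⟨a, ha⟩ := hrowpos i
    exact Finset.mem_image.mpr ⟨(i, a), Finset.mem_filter.mpr ⟨Finset.mem_univ _, ha⟩, rfl⟩
  have hinj : Set.InjOn Prod.fst (S : Set (Fin (3 * m) × Fin m)) := by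
    apply Finset.injOn_of_card_image_eq
    have h1 : (S.image Prod.fst).card ≤ S.card := Finset.card_image_le
    have h2 : (S.image Prod.fst).card = 3 * m := by
      rw [himg, Finset.card_univ, Fintype.card_fin]
    omega
  have huniq : ∀ (i : Fin (3 * m)) (a b : Fin m),
      0 < f (i, a) → 0 < f (i, b) → a = b := by
    intro i a b ha hb
    have h1 : ((i, a) : Fin (3 * m) × Fin m) ∈ S :=
      Finset.mem_filter.mpr ⟨Finset.mem_univ _, ha⟩
    have h2 : ((i, b) : Fin (3 * m) × Fin m) ∈ S :=
      Finset.mem_filter.mpr ⟨Finset.mem_univ _, hb⟩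
    have := hinj h1 h2 rfl
    exact congrArg Prod.snd this
  choose g hg using hrowpos
  have hfg : ∀ i, f (i, g i) = s i := by
    intro i
    rw [← hrow i]
    symm
    apply Finset.sum_eq_single (g i)
    · intro b _ hb
      by_contra h
      exact hb (huniq i b (g i) (Nat.pos_of_ne_zero h) (hg i))
    · intro h; exact absurd (Finset.mem_univ _) h
  set T : Fin m → Finset (Fin (3 * m)) :=
    fun a => Finset.univ.filter (fun i => g i = a) with hTdef
  have hcol : ∀ a, ∑ i ∈ T a, s i ≤ B := by
    intro a
    calc ∑ i ∈ T a, s i = ∑ i ∈ T a, f (i, a) := by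
          apply Finset.sum_congr rfl
          intro i hi
          have hgi : g i = a := (Finset.mem_filter.mp hi).2
          rw [← hgi, hfg]
      _ ≤ ∑ i, f (i, a) :=
          Finset.sum_le_sum_of_subset (Finset.filter_subset _ _)
      _ ≤ B := hcap a
  have htotcol : ∑ a, ∑ i ∈ T a, s i = m * B := by
    rw [← htot]
    exact Finset.sum_fiberwise Finset.univ g s
  have hcoleq : ∀ a, ∑ i ∈ T a, s i = B := by
    by_contra h
    push_neg at h
    obtain ⟨a, ha⟩ := h
    have hlt : ∑ i ∈ T a, s i < B := lt_of_le_of_ne (hcol a) ha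
    have hstrict : ∑ a', ∑ i ∈ T a', s i < ∑ _a' : Fin m, B :=
      Finset.sum_lt_sum (fun a' _ => hcol a') ⟨a, Finset.mem_univ _, hlt⟩
    rw [htotcol, Finset.sum_const, Finset.card_univ, Fintype.card_fin, smul_eq_mul] at hstrict
    omega
  have hcard3 : ∀ a, (T a).card = 3 := by
    intro a
    set k := (T a).card with hk
    have h1 : k * (B + 1) ≤ 4 * B := by
      calc k * (B + 1) = ∑ _i ∈ T a, (B + 1) := by
            rw [Finset.sum_const, smul_eq_mul]
        _ ≤ ∑ i ∈ T a, 4 * s i :=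
            Finset.sum_le_sum (fun i _ => by have := hlo i; omega)
        _ = 4 * ∑ i ∈ T a, s i := by rw [Finset.mul_sum]
        _ = 4 * B := by rw [hcoleq a]
    have h2 : 2 * B ≤ k * (B - 1) := by
      calc 2 * B = 2 * ∑ i ∈ T a, s i := by rw [hcoleq a]
        _ = ∑ i ∈ T a, 2 * s i := by rw [Finset.mul_sum]
        _ ≤ ∑ _i ∈ T a, (B - 1) :=
            Finset.sum_le_sum (fun i _ => by have := hhi i; omega)
        _ = k * (B - 1) := by rw [Finset.sum_const, smul_eq_mul]
    have hle3 : k ≤ 3 := by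
      by_contra hgt
      push_neg at hgt
      have : 4 * (B + 1) ≤ k * (B + 1) := Nat.mul_le_mul_right _ hgt
      omega
    have hge3 : 3 ≤ k := by
      by_contra hlt
      push_neg at hlt
      have : k * (B - 1) ≤ 2 * (B - 1) := Nat.mul_le_mul_right _ (by omega)
      omega
    omega
  refine ⟨T, ?_, ?_, hcard3, hcoleq⟩
  · intro j k hjk
    simp only [Finset.disjoint_left, hTdef, Finset.mem_filter]
    rintro i ⟨_, h1⟩ ⟨_, h2⟩
    exact hjk (by rw [← h1, h2])
  · apply Finset.eq_univ_of_forall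
    intro i
    exact Finset.mem_biUnion.mpr ⟨g i, Finset.mem_univ _,
      Finset.mem_filter.mpr ⟨Finset.mem_univ _, rfl⟩⟩
end

section
/- MEAF generalizes Set Cover: given a Set Cover instance with universe X and family 𝒮, the MEAF instance with one user per element x (demand 1), one app per set S with capacity |X|, dashed edge (x,S) iff x ∈ S, and no solid edges, has the property that from any feasible MEAF solution activating k edges one can extract a set cover of size at most k, and any set cover of size k yields a feasible MEAF solution activating at most |X| edges touching only k apps. In particular, the minimum number of distinct apps touched by activated edges in a feasible solution equals the minimum set cover size. -/
/-- From a set cover `C`, construct a feasible MEAF solution whose touched-apps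
count is at most `C.card`. -/
lemma meaf_construct {X : Type*} [Fintype X] [DecidableEq X]
    (𝒮 : Finset (Finset X)) (C : Finset (Finset X)) (hC : C ⊆ 𝒮)
    (hcov : ∀ x : X, ∃ S ∈ C, x ∈ S) :
    ∃ n ∈ {n : ℕ | ∃ (E' : Finset (X × Finset X)) (f : X × Finset X → ℕ),
        (∀ e ∈ E', e.2 ∈ 𝒮 ∧ e.1 ∈ e.2) ∧
        (∀ x : X, ∑ S ∈ 𝒮, f (x, S) = 1) ∧
        (∀ S ∈ 𝒮, ∑ x : X, f (x, S) ≤ Fintype.card X) ∧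
        (∀ x S, 0 < f (x, S) → (x, S) ∈ E') ∧
        {S : Finset X | ∃ x : X, (x, S) ∈ E' ∧ 0 < f (x, S)}.ncard = n},
      n ≤ C.card := by
  classical
  choose g hg1 hg2 using hcov
  set f : X × Finset X → ℕ := fun p => if p.2 = g p.1 then 1 else 0 with hf
  set E' : Finset (X × Finset X) := Finset.univ.image (fun x => (x, g x)) with hE'
  set T : Set (Finset X) := {S : Finset X | ∃ x : X, (x, S) ∈ E' ∧ 0 < f (x, S)} with hT
  have hTsub : T ⊆ ↑C := by
    rintro S ⟨x, hxE, hxf⟩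
    have : S = g x := by
      by_contra h
      simp [hf, h] at hxf
    rw [this]; exact hg1 x
  refine ⟨T.ncard, ⟨E', f, ?_, ?_, ?_, ?_, rfl⟩, ?_⟩
  · rintro e he
    simp only [hE', Finset.mem_image, Finset.mem_univ, true_and] at he
    obtain ⟨x, rfl⟩ := he
    exact ⟨hC (hg1 x), hg2 x⟩
  · intro x
    have : ∑ S ∈ 𝒮, f (x, S) = ∑ S ∈ 𝒮, if S = g x then 1 else 0 := rfl
    rw [this, Finset.sum_ite_eq' 𝒮 (g x) (fun _ => 1), if_pos (hC (hg1 x))]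
  · intro S _
    calc ∑ x : X, f (x, S) ≤ ∑ _x : X, 1 := by
          apply Finset.sum_le_sum
          intro x _
          simp only [hf]
          split <;> omega
      _ = Fintype.card X := by simp
  · intro x S hpos
    have : S = g x := by
      by_contra h
      simp [hf, h] at hpos
    subst this
    simp [hE']
  · calc T.ncard ≤ (↑C : Set (Finset X)).ncard :=
          Set.ncard_le_ncard hTsub C.finite_toSet
      _ = C.card := by simp

theorem meaf_generalizes_set_cover
    {X : Type*} [Fintype X] [DecidableEq X]
    (𝒮 : Finset (Finset X)) (hcov : ∀ x : X, ∃ S ∈ 𝒮, x ∈ S) :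
    sInf {n : ℕ | ∃ (E' : Finset (X × Finset X)) (f : X × Finset X → ℕ),
        (∀ e ∈ E', e.2 ∈ 𝒮 ∧ e.1 ∈ e.2) ∧
        (∀ x : X, ∑ S ∈ 𝒮, f (x, S) = 1) ∧
        (∀ S ∈ 𝒮, ∑ x : X, f (x, S) ≤ Fintype.card X) ∧
        (∀ x S, 0 < f (x, S) → (x, S) ∈ E') ∧
        {S : Finset X | ∃ x : X, (x, S) ∈ E' ∧ 0 < f (x, S)}.ncard = n} =
    sInf {n : ℕ | ∃ C : Finset (Finset X),
        C ⊆ 𝒮 ∧ (∀ x : X, ∃ S ∈ C, x ∈ S) ∧ C.card = n} := by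
  classical
  set L := {n : ℕ | ∃ (E' : Finset (X × Finset X)) (f : X × Finset X → ℕ),
        (∀ e ∈ E', e.2 ∈ 𝒮 ∧ e.1 ∈ e.2) ∧
        (∀ x : X, ∑ S ∈ 𝒮, f (x, S) = 1) ∧
        (∀ S ∈ 𝒮, ∑ x : X, f (x, S) ≤ Fintype.card X) ∧
        (∀ x S, 0 < f (x, S) → (x, S) ∈ E') ∧
        {S : Finset X | ∃ x : X, (x, S) ∈ E' ∧ 0 < f (x, S)}.ncard = n} with hL
  set R := {n : ℕ | ∃ C : Finset (Finset X),
        C ⊆ 𝒮 ∧ (∀ x : X, ∃ S ∈ C, x ∈ S) ∧ C.card = n} with hR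
  have hRne : R.Nonempty := ⟨𝒮.card, 𝒮, Finset.Subset.refl _, hcov, rfl⟩
  have hLsubR : L ⊆ R := by
    rintro n ⟨E', f, h1, h2, h3, h4, h5⟩
    set T : Set (Finset X) := {S : Finset X | ∃ x : X, (x, S) ∈ E' ∧ 0 < f (x, S)} with hT
    have hTfin : T.Finite := by
      apply Set.Finite.subset 𝒮.finite_toSet
      rintro S ⟨x, hxE, _⟩
      exact (h1 _ hxE).1
    refine ⟨hTfin.toFinset, ?_, ?_, ?_⟩
    · intro S hS
      rw [Set.Finite.mem_toFinset] at hS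
      obtain ⟨x, hxE, _⟩ := hS
      exact (h1 _ hxE).1
    · intro x
      have hsum := h2 x
      have : ∃ S ∈ 𝒮, 0 < f (x, S) := by
        by_contra h
        push_neg at h
        have : ∑ S ∈ 𝒮, f (x, S) = 0 :=
          Finset.sum_eq_zero fun S hS => by have := h S hS; omega
        omega
      obtain ⟨S, hS𝒮, hSpos⟩ := this
      have hxE : (x, S) ∈ E' := h4 x S hSpos
      exact ⟨S, by rw [Set.Finite.mem_toFinset]; exact ⟨x, hxE, hSpos⟩,
        (h1 _ hxE).2⟩
    · rw [← h5]
      exact (Set.ncard_eq_toFinset_card T hTfin).symm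
  have hLne : L.Nonempty := by
    obtain ⟨n, hn, _⟩ := meaf_construct 𝒮 𝒮 (Finset.Subset.refl _) hcov
    exact ⟨n, hn⟩
  apply le_antisymm
  · have hmem := Nat.sInf_mem hRne
    obtain ⟨C, hC1, hC2, hC3⟩ := hmem
    obtain ⟨n, hnL, hnle⟩ := meaf_construct 𝒮 C hC1 hC2
    exact le_trans (Nat.sInf_le hnL) (hC3 ▸ hnle)
  · exact Nat.sInf_le (hLsubR (Nat.sInf_mem hLne))
end
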